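/- For every 3-CNF formula φ with n variables and m clauses (each clause having three literals over distinct variables and no clause containing a variable together with its negation), the binary one-cluster PFA A_φ is carefully synchronizing if and only if φ has a satisfying truth assignment. (This is the correctness of the reduction from 3-SAT underlying the NP-hardness of deciding careful synchronizability of binary one-cluster PFAs.) -/

import Mathlib

namespace PaperSync

variable {Q A : Type*}

/-- The extension of a partial transition function `δ : Q → A → Option Q` to words. -/
def wordMap (δ : Q → A → Option Q) : Q → List A → Option Q
  | q, [] => some q
  | q, x :: w => (δ q x).bind fun q' => wordMap δ q' w

/-- A word `w` carefully synchronizes the PFA `δ`: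
`δ(q, w)` is defined for every state and all values agree. -/
def CarefullySync (δ : Q → A → Option Q) (w : List A) : Prop :=
  ∃ qbar : Q, ∀ q : Q, wordMap δ q w = some qbar

open Classical in
/-- The image of a set of states under a word: defined iff `δ(q,w)` is defined
for all `q ∈ S`, in which case it is `{δ(q,w) : q ∈ S}`. -/
noncomputable def setImage (δ : Q → A → Option Q) (S : Set Q) (w : List A) :
    Option (Set Q) :=
  if ∀ q ∈ S, (wordMap δ q w).isSome then
    some {q' | ∃ q ∈ S, wordMap δ q w = some q'}
  else none

/-- A PFA is one-cluster with respect to a letter `a`: `a` is defined at every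
state and the functional digraph `G_a` of `a` has exactly one weakly connected
component. -/
def OneCluster (δ : Q → A → Option Q) (a : A) : Prop :=
  (∀ q : Q, (δ q a).isSome) ∧
  ∀ p q : Q, Relation.EqvGen (fun u v => δ u a = some v) p q

/-- The vertex set of the `a`-cycle: states returning to themselves under some
positive power of `a`. -/
def cycleSet (δ : Q → A → Option Q) (a : A) : Set Q :=
  {q | ∃ k : ℕ, 1 ≤ k ∧ wordMap δ q (List.replicate k a) = some q}

/-- The level of a state: the least `k` with `δ(q, a^k)` on the `a`-cycle. -/
noncomputable def levelOf (δ : Q → A → Option Q) (a : A) (q : Q) : ℕ :=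
  sInf {k | ∃ p ∈ cycleSet δ a, wordMap δ q (List.replicate k a) = some p}

/-- The level of `G_a`: the maximal level of a state. -/
noncomputable def levelG [Fintype Q] (δ : Q → A → Option Q) (a : A) : ℕ :=
  Finset.univ.sup (levelOf δ a)

/-- The binary alphabet `{a, b}` of `A_φ`. -/
inductive AB | a | b
deriving DecidableEq

instance instFintypeAB : Fintype AB :=
  ⟨{AB.a, AB.b}, fun x => by cases x <;> simp⟩

/-- The states of `A_φ` for a 3-CNF formula with `n` variables and `m`
clauses: `p i` is `p_{i+1}`, `r i` is `r_{i+1}`, `ct i j` is `c_{i+1}^{x_{j+1}}`,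
`cf i j` is `c̄_{i+1}^{x_{j+1}}`, `ctend i` is `c_{i+1}^{end}`, and `cfend i` is
`c̄_{i+1}^{end}`. -/
inductive StQ (n m : ℕ)
  | p (i : Fin m)
  | r (i : Fin m)
  | ct (i : Fin m) (j : Fin n)
  | cf (i : Fin m) (j : Fin n)
  | ctend (i : Fin m)
  | cfend (i : Fin m)
deriving DecidableEq, Fintype

/-- The transition function of `A_φ`, where the formula `φ` is given by its
clauses `Cl i ⊆ Fin n × Bool` (a literal `(j, tt)` is `x_{j+1}`, a literal
`(j, ff)` is `¬x_{j+1}`). -/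
def dphi (n m : ℕ) (hn : 0 < n) (Cl : Fin m → Finset (Fin n × Bool)) :
    StQ n m → AB → Option (StQ n m)
  | .p i, .a => some (.p ⟨(i.val + 1) % m, Nat.mod_lt _ i.pos⟩)
  | .p i, .b => some (.cf i ⟨0, hn⟩)
  | .r i, .a => some (.p i)
  | .r _, .b => none
  | .ctend i, .a => some (.r i)
  | .ctend i, .b => some (.p ⟨0, i.pos⟩)
  | .cfend i, .a => some (.r i)
  | .cfend _, .b => none
  | .ct i j, _ =>
      some (if h : j.val + 1 < n then .ct i ⟨j.val + 1, h⟩ else .ctend i)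
  | .cf i j, .a =>
      some (if h : j.val + 1 < n then
          (if (j, true) ∈ Cl i then .ct i ⟨j.val + 1, h⟩ else .cf i ⟨j.val + 1, h⟩)
        else (if (j, true) ∈ Cl i then .ctend i else .cfend i))
  | .cf i j, .b =>
      some (if h : j.val + 1 < n then
          (if (j, false) ∈ Cl i then .ct i ⟨j.val + 1, h⟩ else .cf i ⟨j.val + 1, h⟩)
        else (if (j, false) ∈ Cl i then .ctend i else .cfend i))

/-- Every clause consists of exactly three literals over pairwise distinct
variables (in particular no clause contains both a variable and its
negation). -/
def GoodClauses (n m : ℕ) (Cl : Fin m → Finset (Fin n × Bool)) : Prop :=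
  ∀ i : Fin m, (Cl i).card = 3 ∧ ((Cl i).image Prod.fst).card = 3

/-- The set `S_init = {c̄_1^{x_1}, …, c̄_m^{x_1}}`. -/
def Sinit (n m : ℕ) (hn : 0 < n) : Set (StQ n m) :=
  Set.range fun i : Fin m => StQ.cf i ⟨0, hn⟩

/-- The set `S_end = {c_1^{end}, …, c_m^{end}}`. -/
def Send (n m : ℕ) : Set (StQ n m) :=
  Set.range StQ.ctend
/-- A truth assignment `e` satisfies `φ` if every clause contains a literal
evaluating to true. -/
def Satisfies (n m : ℕ) (Cl : Fin m → Finset (Fin n × Bool))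
    (e : Fin n → Bool) : Prop :=
  ∀ i : Fin m, ∃ l ∈ Cl i, e l.1 = l.2

-- auxiliary development
lemma wordMap_append {Q A : Type*} (δ : Q → A → Option Q) (q : Q) (u v : List A) :
    wordMap δ q (u ++ v) = (wordMap δ q u).bind fun q' => wordMap δ q' v := by
  induction u generalizing q with
  | nil => simp [wordMap]
  | cons x u ih => cases h : δ q x <;> simp [wordMap, h, ih]

lemma wordMap_singleton {Q A : Type*} (δ : Q → A → Option Q) (q : Q) (x : A) :
    wordMap δ q [x] = δ q x := by
  cases h : δ q x <;> simp [wordMap, h]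

def bitAB : AB → Bool
  | .a => true
  | .b => false

section Dev

variable {n m : ℕ} (hn : 0 < n) (hm : 0 < m) (Cl : Fin m → Finset (Fin n × Bool))

def SatB (e : Fin n → Bool) (j : ℕ) (i' : Fin m) : Prop :=
  ∃ l ∈ Cl i', l.1.val < j ∧ e l.1 = l.2

open Classical in
noncomputable def trackSt (e : Fin n → Bool) (j : ℕ) (i' : Fin m) : StQ n m :=
  if hjn : j < n then (if SatB Cl e j i' then .ct i' ⟨j, hjn⟩ else .cf i' ⟨j, hjn⟩)
  else (if SatB Cl e j i' then .ctend i' else .cfend i')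

lemma trackSt_zero (e : Fin n → Bool) (i' : Fin m) :
    trackSt Cl e 0 i' = .cf i' ⟨0, hn⟩ := by
  rw [trackSt, dif_pos hn, if_neg]
  rintro ⟨l, -, h, -⟩; omega

lemma trackSt_inj (e : Fin n → Bool) (j : ℕ) (i1 i2 : Fin m)
    (h : trackSt Cl e j i1 = trackSt Cl e j i2) : i1 = i2 := by
  unfold trackSt at h
  split_ifs at h <;> simp_all

lemma dphi_p_a [NeZero m] (i : Fin m) :
    dphi n m hn Cl (.p i) .a = some (.p (i + 1)) := by
  have h1 : dphi n m hn Cl (.p i) .a = some (.p ⟨(i.val + 1) % m, Nat.mod_lt _ i.pos⟩) := rfl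
  have h2 : (⟨(i.val + 1) % m, Nat.mod_lt _ i.pos⟩ : Fin m) = i + 1 := by
    apply Fin.ext
    simp [Fin.add_def, Nat.add_mod_mod]
  rw [h1, h2]

lemma dphi_trackSt (e : Fin n → Bool) {j : ℕ} (hjn : j < n) (i' : Fin m) (x : AB) :
    dphi n m hn Cl (trackSt Cl e j i') x
      = some (trackSt Cl (Function.update e ⟨j, hjn⟩ (bitAB x)) (j + 1) i') := by
  set e' := Function.update e ⟨j, hjn⟩ (bitAB x) with he'
  have hagree : ∀ l : Fin n × Bool, l.1.val < j → e' l.1 = e l.1 := by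
    intro l hl
    exact Function.update_of_ne (Fin.ne_of_val_ne (show l.1.val ≠ j by omega)) _ _
  by_cases hs : SatB Cl e j i'
  · have hs' : SatB Cl e' (j + 1) i' := by
      obtain ⟨l, hl, hlt, hev⟩ := hs
      exact ⟨l, hl, Nat.lt_succ_of_lt hlt, by rw [hagree l hlt]; exact hev⟩
    rw [trackSt, dif_pos hjn, if_pos hs]
    have h1 : dphi n m hn Cl (.ct i' ⟨j, hjn⟩) x
        = some (if h : j + 1 < n then .ct i' ⟨j + 1, h⟩ else .ctend i') := by
      cases x <;> rfl
    rw [h1, trackSt]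
    by_cases h2 : j + 1 < n
    · rw [dif_pos h2, dif_pos h2, if_pos hs']
    · rw [dif_neg h2, dif_neg h2, if_pos hs']
  · have key : SatB Cl e' (j + 1) i' ↔ ((⟨j, hjn⟩ : Fin n), bitAB x) ∈ Cl i' := by
      constructor
      · rintro ⟨l, hl, hlt, hev⟩
        rcases Nat.lt_or_ge l.1.val j with h1 | h1
        · exact absurd ⟨l, hl, h1, by rw [← hagree l h1]; exact hev⟩ hs
        · have hl1 : l.1 = (⟨j, hjn⟩ : Fin n) := Fin.ext (show l.1.val = j by
            have := hlt; omega)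
          have hb : l.2 = bitAB x := by
            rw [← hev, he', hl1, Function.update_self]
          rw [← hl1, ← hb]; exact hl
      · intro hmem
        exact ⟨(⟨j, hjn⟩, bitAB x), hmem, Nat.lt_succ_self j,
          by rw [he', Function.update_self]⟩
    rw [trackSt, dif_pos hjn, if_neg hs]
    have h1 : dphi n m hn Cl (.cf i' ⟨j, hjn⟩) x
        = some (if h : j + 1 < n then
            (if ((⟨j, hjn⟩ : Fin n), bitAB x) ∈ Cl i' then .ct i' ⟨j + 1, h⟩
              else .cf i' ⟨j + 1, h⟩)
          else (if ((⟨j, hjn⟩ : Fin n), bitAB x) ∈ Cl i' then .ctend i'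
              else .cfend i')) := by
      cases x <;> rfl
    rw [h1, trackSt]
    by_cases hmem : ((⟨j, hjn⟩ : Fin n), bitAB x) ∈ Cl i' <;>
      by_cases h2 : j + 1 < n
    · rw [dif_pos h2, dif_pos h2, if_pos hmem, if_pos (key.mpr hmem)]
    · rw [dif_neg h2, dif_neg h2, if_pos hmem, if_pos (key.mpr hmem)]
    · rw [dif_pos h2, dif_pos h2, if_neg hmem, if_neg (fun hh => hmem (key.mp hh))]
    · rw [dif_neg h2, dif_neg h2, if_neg hmem, if_neg (fun hh => hmem (key.mp hh))]

open Classical in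
lemma trackSt_end (e : Fin n → Bool) (i' : Fin m) :
    trackSt Cl e n i' = if SatB Cl e n i' then .ctend i' else .cfend i' := by
  rw [trackSt, dif_neg (lt_irrefl n)]

lemma rep_p (k : ℕ) (i : Fin m) :
    wordMap (dphi n m hn Cl) (.p i) (List.replicate k AB.a)
      = some (.p ⟨(i.val + k) % m, Nat.mod_lt _ i.pos⟩) := by
  induction k generalizing i with
  | zero =>
    simp only [List.replicate, wordMap]
    congr 1
    exact congrArg StQ.p (Fin.ext (Nat.mod_eq_of_lt i.isLt).symm)
  | succ k ih =>
    rw [List.replicate_succ]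
    have hδ : dphi n m hn Cl (.p i) .a
        = some (.p ⟨(i.val + 1) % m, Nat.mod_lt _ i.pos⟩) := rfl
    rw [wordMap, hδ]
    show wordMap (dphi n m hn Cl) (.p ⟨(i.val + 1) % m, Nat.mod_lt _ i.pos⟩)
        (List.replicate k AB.a) = _
    rw [ih]
    congr 1
    refine congrArg StQ.p (Fin.ext ?_)
    show ((i.val + 1) % m + k) % m = (i.val + (k + 1)) % m
    rw [Nat.mod_add_mod]
    ring_nf

lemma rep_ct (i : Fin m) : ∀ (d : ℕ) (j : Fin n), n - j.val = d →
    wordMap (dphi n m hn Cl) (.ct i j) (List.replicate d AB.a) = some (.ctend i) := by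
  intro d
  induction d with
  | zero => intro j hj; have := j.isLt; omega
  | succ d ih =>
    intro j hj
    rw [List.replicate_succ]
    have hδ : dphi n m hn Cl (.ct i j) .a
        = some (if h : j.val + 1 < n then .ct i ⟨j.val + 1, h⟩ else .ctend i) := rfl
    rw [wordMap, hδ]
    by_cases h : j.val + 1 < n
    · rw [dif_pos h]
      show wordMap (dphi n m hn Cl) (.ct i ⟨j.val + 1, h⟩) (List.replicate d AB.a) = _
      exact ih ⟨j.val + 1, h⟩ (by simp; omega)
    · rw [dif_neg h]
      have hd : d = 0 := by have := j.isLt; omega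
      subst hd
      rfl

lemma rep_cf (i : Fin m) : ∀ (d : ℕ) (j : Fin n), n - j.val = d →
    wordMap (dphi n m hn Cl) (.cf i j) (List.replicate d AB.a) = some (.ctend i) ∨
    wordMap (dphi n m hn Cl) (.cf i j) (List.replicate d AB.a) = some (.cfend i) := by
  intro d
  induction d with
  | zero => intro j hj; have := j.isLt; omega
  | succ d ih =>
    intro j hj
    rw [List.replicate_succ]
    have hδ : dphi n m hn Cl (.cf i j) .a
        = some (if h : j.val + 1 < n then
            (if (j, true) ∈ Cl i then .ct i ⟨j.val + 1, h⟩ else .cf i ⟨j.val + 1, h⟩)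
          else (if (j, true) ∈ Cl i then .ctend i else .cfend i)) := rfl
    rw [wordMap, hδ]
    by_cases h : j.val + 1 < n
    · rw [dif_pos h]
      by_cases hmem : (j, true) ∈ Cl i
      · rw [if_pos hmem]
        left
        show wordMap (dphi n m hn Cl) (.ct i ⟨j.val + 1, h⟩) (List.replicate d AB.a) = _
        exact rep_ct hn Cl i d ⟨j.val + 1, h⟩ (by simp; omega)
      · rw [if_neg hmem]
        exact ih ⟨j.val + 1, h⟩ (by simp; omega)
    · rw [dif_neg h]
      have hd : d = 0 := by have := j.isLt; omega
      subst hd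
      by_cases hmem : (j, true) ∈ Cl i
      · rw [if_pos hmem]; left; rfl
      · rw [if_neg hmem]; right; rfl

lemma fromEnd (i : Fin m) (k : ℕ) (s : StQ n m)
    (hδ : dphi n m hn Cl s .a = some (.r i)) :
    wordMap (dphi n m hn Cl) s (List.replicate (k + 2) AB.a)
      = some (.p ⟨(i.val + k) % m, Nat.mod_lt _ i.pos⟩) := by
  rw [List.replicate_succ, wordMap, hδ]
  show wordMap (dphi n m hn Cl) (.r i) (List.replicate (k + 1) AB.a) = _
  rw [List.replicate_succ, wordMap]
  show wordMap (dphi n m hn Cl) (.p i) (List.replicate k AB.a) = _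
  exact rep_p hn Cl k i

lemma allP (q : StQ n m) : ∃ i : Fin m,
    wordMap (dphi n m hn Cl) q (List.replicate (n + 2) AB.a) = some (.p i) := by
  cases q with
  | p i => exact ⟨_, rep_p hn Cl (n + 2) i⟩
  | r i =>
    refine ⟨⟨(i.val + (n + 1)) % m, Nat.mod_lt _ i.pos⟩, ?_⟩
    rw [List.replicate_succ, wordMap]
    show wordMap (dphi n m hn Cl) (.p i) (List.replicate (n + 1) AB.a) = _
    exact rep_p hn Cl (n + 1) i
  | ctend i => exact ⟨_, fromEnd hn Cl i n (.ctend i) rfl⟩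
  | cfend i => exact ⟨_, fromEnd hn Cl i n (.cfend i) rfl⟩
  | ct i j =>
    have hsplit : n + 2 = (n - j.val) + (j.val + 2) := by have := j.isLt; omega
    rw [hsplit, List.replicate_add, wordMap_append, rep_ct hn Cl i (n - j.val) j rfl]
    exact ⟨_, fromEnd hn Cl i j.val (.ctend i) rfl⟩
  | cf i j =>
    have hsplit : n + 2 = (n - j.val) + (j.val + 2) := by have := j.isLt; omega
    rw [hsplit, List.replicate_add, wordMap_append]
    rcases rep_cf hn Cl i (n - j.val) j rfl with h | h
    · rw [h]
      exact ⟨_, fromEnd hn Cl i j.val (.ctend i) rfl⟩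
    · rw [h]
      exact ⟨_, fromEnd hn Cl i j.val (.cfend i) rfl⟩

def lettE (e : Fin n → Bool) (j : ℕ) : AB :=
  if h : j < n then (if e ⟨j, h⟩ then .a else .b) else .a

def weFrom (e : Fin n → Bool) : ℕ → ℕ → List AB
  | _, 0 => []
  | j, d + 1 => lettE e j :: weFrom e (j + 1) d

lemma weFrom_run (e : Fin n → Bool) (i' : Fin m) : ∀ (d j : ℕ), j + d = n →
    wordMap (dphi n m hn Cl) (trackSt Cl e j i') (weFrom e j d)
      = some (trackSt Cl e n i') := by
  intro d
  induction d with
  | zero =>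
    intro j hj
    have : j = n := by omega
    subst this
    rfl
  | succ d ih =>
    intro j hj
    have hjn : j < n := by omega
    have hb : bitAB (lettE e j) = e ⟨j, hjn⟩ := by
      rw [lettE, dif_pos hjn]
      cases h : e ⟨j, hjn⟩ <;> simp [h, bitAB]
    rw [weFrom, wordMap, dphi_trackSt hn Cl e hjn i' (lettE e j), hb,
      Function.update_eq_self]
    show wordMap (dphi n m hn Cl) (trackSt Cl e (j + 1) i') (weFrom e (j + 1) d) = _
    exact ih (j + 1) (by omega)

lemma rtgOfRun : ∀ (k : ℕ) (q q' : StQ n m),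
    wordMap (dphi n m hn Cl) q (List.replicate k AB.a) = some q' →
    Relation.ReflTransGen (fun u v => dphi n m hn Cl u AB.a = some v) q q' := by
  intro k
  induction k with
  | zero =>
    intro q q' h
    simp only [List.replicate, wordMap, Option.some.injEq] at h
    subst h
    rfl
  | succ k ih =>
    intro q q' h
    rw [List.replicate_succ, wordMap] at h
    cases hδ : dphi n m hn Cl q AB.a with
    | none => rw [hδ] at h; exact absurd h (by simp)
    | some q1 =>
      rw [hδ] at h
      exact Relation.ReflTransGen.head hδ (ih q1 q' h)

lemma reach_p0 (q : StQ n m) :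
    Relation.ReflTransGen (fun u v => dphi n m hn Cl u AB.a = some v) q (.p ⟨0, hm⟩) := by
  obtain ⟨i, hi⟩ := allP hn Cl q
  refine (rtgOfRun hn Cl _ _ _ hi).trans ?_
  have h2 := rtgOfRun hn Cl (m - i.val) (.p i) _ (rep_p hn Cl (m - i.val) i)
  have h3 : (⟨(i.val + (m - i.val)) % m, Nat.mod_lt _ i.pos⟩ : Fin m) = ⟨0, hm⟩ := by
    apply Fin.ext
    show (i.val + (m - i.val)) % m = 0
    have : i.val + (m - i.val) = m := by have := i.isLt; omega
    rw [this, Nat.mod_self]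
  rw [h3] at h2
  exact h2

lemma extract [NeZero m] (hm2 : 2 ≤ m) (w : List AB) (qbar : StQ n m)
    (hs : ∀ q, wordMap (dphi n m hn Cl) q w = some qbar) :
    ∀ (v u : List AB), u ++ v = w →
      ((∃ c : Fin m, ∀ i, wordMap (dphi n m hn Cl) (.p i) u = some (.p (i + c))) ∨
       (∃ (c : Fin m) (e : Fin n → Bool) (j : ℕ), j ≤ n ∧
         ∀ i, wordMap (dphi n m hn Cl) (.p i) u = some (trackSt Cl e j (i + c))) ∨
       (∃ c : Fin m, ∀ i, wordMap (dphi n m hn Cl) (.p i) u = some (.r (i + c)))) →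
      ∃ e, Satisfies n m Cl e := by
  intro v
  induction v with
  | nil =>
    intro u hu hInv
    exfalso
    rw [List.append_nil] at hu
    subst hu
    have i0 : Fin m := ⟨0, by omega⟩
    have hne : (⟨0, by omega⟩ : Fin m) ≠ (⟨1, by omega⟩ : Fin m) := by
      intro h
      exact absurd (congrArg Fin.val h) (by simp)
    rcases hInv with ⟨c, hc⟩ | ⟨c, e, j, hj, hc⟩ | ⟨c, hc⟩
    · have h0 := (hc ⟨0, by omega⟩).symm.trans (hs (.p ⟨0, by omega⟩))
      have h1 := (hc ⟨1, by omega⟩).symm.trans (hs (.p ⟨1, by omega⟩))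
      rw [← h1] at h0
      have := StQ.p.inj (Option.some.inj h0)
      exact hne (add_right_cancel this)
    · have h0 := (hc ⟨0, by omega⟩).symm.trans (hs (.p ⟨0, by omega⟩))
      have h1 := (hc ⟨1, by omega⟩).symm.trans (hs (.p ⟨1, by omega⟩))
      rw [← h1] at h0
      have := trackSt_inj Cl e j _ _ (Option.some.inj h0)
      exact hne (add_right_cancel this)
    · have h0 := (hc ⟨0, by omega⟩).symm.trans (hs (.p ⟨0, by omega⟩))
      have h1 := (hc ⟨1, by omega⟩).symm.trans (hs (.p ⟨1, by omega⟩))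
      rw [← h1] at h0
      have := StQ.r.inj (Option.some.inj h0)
      exact hne (add_right_cancel this)
  | cons x v ih =>
    intro u hu hInv
    have hu' : (u ++ [x]) ++ v = w := by
      rw [List.append_assoc]
      exact hu
    have hsnoc : ∀ (i : Fin m) (s : StQ n m), wordMap (dphi n m hn Cl) (.p i) u = some s →
        wordMap (dphi n m hn Cl) (.p i) (u ++ [x]) = dphi n m hn Cl s x := by
      intro i s h
      rw [wordMap_append, h]
      exact wordMap_singleton _ s x
    rcases hInv with ⟨c, hc⟩ | ⟨c, e, j, hj, hc⟩ | ⟨c, hc⟩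
    · cases x with
      | a =>
        refine ih (u ++ [AB.a]) hu' (Or.inl ⟨c + 1, fun i => ?_⟩)
        rw [hsnoc i _ (hc i), dphi_p_a hn Cl (i + c), add_assoc]
      | b =>
        refine ih (u ++ [AB.b]) hu' (Or.inr (Or.inl
          ⟨c, fun _ => false, 0, Nat.zero_le n, fun i => ?_⟩))
        rw [hsnoc i _ (hc i), trackSt_zero hn Cl _ (i + c)]
        rfl
    · rcases Nat.lt_or_ge j n with hjn | hjn
      · refine ih (u ++ [x]) hu' (Or.inr (Or.inl
          ⟨c, Function.update e ⟨j, hjn⟩ (bitAB x), j + 1, hjn, fun i => ?_⟩))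
        rw [hsnoc i _ (hc i), dphi_trackSt hn Cl e hjn (i + c) x]
      · have hjeq : j = n := le_antisymm hj hjn
        rw [hjeq] at hc
        cases x with
        | a =>
          refine ih (u ++ [AB.a]) hu' (Or.inr (Or.inr ⟨c, fun i => ?_⟩))
          rw [hsnoc i _ (hc i), trackSt_end Cl e (i + c)]
          by_cases hsb : SatB Cl e n (i + c)
          · rw [if_pos hsb]; rfl
          · rw [if_neg hsb]; rfl
        | b =>
          by_cases hall : ∀ i' : Fin m, SatB Cl e n i'
          · refine ⟨e, fun i' => ?_⟩
            obtain ⟨l, hl, _, hev⟩ := hall i'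
            exact ⟨l, hl, hev⟩
          · exfalso
            push_neg at hall
            obtain ⟨i', hi'⟩ := hall
            have hdead : wordMap (dphi n m hn Cl) (.p (i' - c)) w = none := by
              rw [← hu, wordMap_append, hc (i' - c), sub_add_cancel,
                trackSt_end Cl e i', if_neg hi']
              rfl
            rw [hs (.p (i' - c))] at hdead
            exact Option.some_ne_none _ hdead
    · cases x with
      | a =>
        refine ih (u ++ [AB.a]) hu' (Or.inl ⟨c, fun i => ?_⟩)
        rw [hsnoc i _ (hc i)]
        rfl
      | b =>
        exfalso
        have hdead : wordMap (dphi n m hn Cl) (.p ⟨0, by omega⟩) w = none := by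
          rw [← hu, wordMap_append, hc ⟨0, by omega⟩]
          rfl
        rw [hs (.p ⟨0, by omega⟩)] at hdead
        exact Option.some_ne_none _ hdead

end Dev

lemma rtg_to_eqv {α : Type*} {r : α → α → Prop} {x y : α}
    (h : Relation.ReflTransGen r x y) : Relation.EqvGen r x y := by
  induction h with
  | refl => exact Relation.EqvGen.refl x
  | tail _ h2 ih => exact Relation.EqvGen.trans _ _ _ ih (Relation.EqvGen.rel _ _ h2)


/-- correctness of the reduction from 3-SAT: the binary
one-cluster PFA `A_φ` is carefully synchronizing iff `φ` has a satisfying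
truth assignment. -/
theorem Aphi_sync_iff_satisfiable (n m : ℕ) (hn : 0 < n) (hm : 0 < m)
    (Cl : Fin m → Finset (Fin n × Bool)) (hCl : GoodClauses n m Cl) :
    OneCluster (dphi n m hn Cl) AB.a ∧
    ((∃ w : List AB, CarefullySync (dphi n m hn Cl) w) ↔
      (∃ e : Fin n → Bool, Satisfies n m Cl e)) := by
  haveI : NeZero m := ⟨hm.ne'⟩
  refine ⟨⟨fun q => ?_, fun p q => ?_⟩, ?_, ?_⟩
  · cases q <;> simp [dphi]
  · exact Relation.EqvGen.trans _ _ _ (rtg_to_eqv (reach_p0 hn hm Cl p))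
      (Relation.EqvGen.symm _ _ (rtg_to_eqv (reach_p0 hn hm Cl q)))
  · rintro ⟨w, qbar, hs⟩
    by_cases hm2 : 2 ≤ m
    · refine extract hn Cl hm2 w qbar hs w [] rfl (Or.inl ⟨0, fun i => ?_⟩)
      rw [add_zero]
      rfl
    · obtain ⟨hcard, -⟩ := hCl ⟨0, hm⟩
      have hne : (Cl ⟨0, hm⟩).Nonempty := by
        rw [← Finset.card_pos, hcard]; omega
      obtain ⟨l, hl⟩ := hne
      refine ⟨fun j => if j = l.1 then l.2 else true, fun i => ?_⟩
      have hi : i = ⟨0, hm⟩ := Fin.ext (by omega)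
      subst hi
      exact ⟨l, hl, by simp⟩
  · rintro ⟨e, he⟩
    refine ⟨List.replicate (n + 2) AB.a ++ AB.b :: (weFrom e 0 n ++ [AB.b]),
      .p ⟨0, hm⟩, fun q => ?_⟩
    obtain ⟨i, hi⟩ := allP hn Cl q
    rw [wordMap_append, hi]
    show wordMap (dphi n m hn Cl) (.p i) (AB.b :: (weFrom e 0 n ++ [AB.b])) = _
    have hb : dphi n m hn Cl (.p i) .b = some (trackSt Cl e 0 i) := by
      rw [trackSt_zero hn Cl e i]
      rfl
    rw [wordMap, hb]
    show wordMap (dphi n m hn Cl) (trackSt Cl e 0 i) (weFrom e 0 n ++ [AB.b]) = _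
    rw [wordMap_append, weFrom_run hn Cl e i n 0 (Nat.zero_add n)]
    have hsat : SatB Cl e n i := by
      obtain ⟨l, hl, hev⟩ := he i
      exact ⟨l, hl, l.1.isLt, hev⟩
    rw [trackSt_end Cl e i, if_pos hsat]
    rfl


end PaperSync
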